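/- arXiv:1508.05743 — 10 statements merged into one kernel-verified Lean document; each statement's English description precedes it below -/
import Mathlib

section
/- Let M be a Γ-graded simple (𝔄,𝔓)-module, i.e., M carries an (𝔄,𝔓)-action with a Γ-grading (M_s)_{s∈Γ} and the only subspaces of M invariant under every z(r) and every H(r) are 0 and M. Set T(r) := z(−r)∘H(r). Then the zero component M₀ is a simple module for the operators T(r): the only subspaces of M₀ invariant under T(r) for every r ∈ Γ are 0 and M₀. -/
/-- `det(r,s) = r₁s₂ − r₂s₁` on `Γ = ℤ×ℤ`. -/
def Gdet (r s : ℤ × ℤ) : ℤ := r.1 * s.2 - r.2 * s.1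

/-- if `M` is a Γ-graded simple (𝔄,𝔓)-module, then the zero
component `M₀` is a simple module for the operators `T r = z (−r) ∘ H r`:
the only subspaces of `M₀` invariant under every `T r` are `0` and `M₀`. -/
theorem stmt1 {M : Type*} [AddCommGroup M] [Module ℂ M]
    (z H : ℤ × ℤ → Module.End ℂ M)
    (hz0 : z 0 = 1)
    (hzz : ∀ r s : ℤ × ℤ, z r * z s = z (r + s))
    (hH0 : H 0 = 0)
    (hHz : ∀ r s : ℤ × ℤ, ⁅H r, z s⁆ = (Gdet r s : ℂ) • z (r + s))
    (hHH : ∀ r s : ℤ × ℤ, ⁅H r, H s⁆ = (Gdet r s : ℂ) • H (r + s))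
    (Ms : ℤ × ℤ → Submodule ℂ M)
    (hgrad : DirectSum.IsInternal Ms)
    (hzmap : ∀ r s : ℤ × ℤ, ∀ v ∈ Ms s, z r v ∈ Ms (r + s))
    (hHmap : ∀ r s : ℤ × ℤ, ∀ v ∈ Ms s, H r v ∈ Ms (r + s))
    (hsimple : ∀ W : Submodule ℂ M,
      (∀ r : ℤ × ℤ, ∀ v ∈ W, z r v ∈ W) →
      (∀ r : ℤ × ℤ, ∀ v ∈ W, H r v ∈ W) → W = ⊥ ∨ W = ⊤) :
    ∀ W : Submodule ℂ M, W ≤ Ms 0 →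
      (∀ r : ℤ × ℤ, ∀ v ∈ W, (z (-r) * H r) v ∈ W) →
      W = ⊥ ∨ W = Ms 0 := by
  intro W hW hT
  set U : Submodule ℂ M := ⨆ s : ℤ × ℤ, W.map (z s) with hUdef
  have hmap0 : W.map (z 0) = W := by
    rw [hz0]; exact Submodule.map_id W
  have hWU : W ≤ U := by
    have h := le_iSup (fun s : ℤ × ℤ => W.map (z s)) 0
    rwa [hmap0] at h
  have hgen : ∀ s : ℤ × ℤ, W.map (z s) ≤ U :=
    fun s => le_iSup (fun s : ℤ × ℤ => W.map (z s)) s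
  -- z-invariance of U
  have hzU : ∀ r : ℤ × ℤ, ∀ v ∈ U, z r v ∈ U := by
    intro r v hv
    refine Submodule.iSup_induction (motive := fun v => z r v ∈ U)
      (fun s : ℤ × ℤ => W.map (z s)) hv ?_ ?_ ?_
    · intro s x hx
      obtain ⟨w, hw, rfl⟩ := hx
      have h1 : z r (z s w) = z (r + s) w := by
        rw [← hzz]; rfl
      rw [h1]
      exact hgen (r + s) ⟨w, hw, rfl⟩
    · simpa using U.zero_mem
    · intro x y hx hy
      simpa [map_add] using U.add_mem hx hy
  -- H-invariance of U
  have hHU : ∀ r : ℤ × ℤ, ∀ v ∈ U, H r v ∈ U := by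
    intro r v hv
    refine Submodule.iSup_induction (motive := fun v => H r v ∈ U)
      (fun s : ℤ × ℤ => W.map (z s)) hv ?_ ?_ ?_
    · intro s x hx
      obtain ⟨w, hw, rfl⟩ := hx
      -- H r (z s w) = z s (H r w) + det • z (r+s) w
      have hcomm : H r (z s w) = z s (H r w) + (Gdet r s : ℂ) • z (r + s) w := by
        have h := hHz r s
        rw [Ring.lie_def] at h
        have h2 := congrArg (fun f : Module.End ℂ M => f w) h
        simp only [LinearMap.sub_apply, Module.End.mul_apply, LinearMap.smul_apply] at h2
        linear_combination (norm := module) h2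
      have hHrw : H r w = z r ((z (-r) * H r) w) := by
        have h1 : z r * (z (-r) * H r) = H r := by
          rw [← mul_assoc, hzz, add_neg_cancel, hz0, one_mul]
        conv_lhs => rw [← h1]
        rfl
      rw [hcomm, hHrw]
      have hmem1 : z s (z r ((z (-r) * H r) w)) ∈ U := by
        have h1 : z s (z r ((z (-r) * H r) w)) = z (s + r) ((z (-r) * H r) w) := by
          rw [← hzz]; rfl
        rw [h1]
        exact hgen (s + r) ⟨_, hT r w hw, rfl⟩
      have hmem2 : (Gdet r s : ℂ) • z (r + s) w ∈ U :=
        U.smul_mem _ (hgen (r + s) ⟨w, hw, rfl⟩)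
      exact U.add_mem hmem1 hmem2
    · simpa using U.zero_mem
    · intro x y hx hy
      simpa [map_add] using U.add_mem hx hy
  rcases hsimple U hzU hHU with hbot | htop
  · left
    exact le_bot_iff.mp (hbot ▸ hWU)
  · right
    -- U ≤ W ⊔ (⨆ s ≠ 0, Ms s)
    set V : Submodule ℂ M := ⨆ s : ℤ × ℤ, ⨆ _ : s ≠ 0, Ms s with hVdef
    have hUle : U ≤ W ⊔ V := by
      apply iSup_le
      intro s
      by_cases hs : s = 0
      · subst hs
        rw [hmap0]
        exact le_sup_left
      · refine le_trans ?_ (le_sup_right (a := W))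
        refine le_trans ?_ (le_iSup₂ (f := fun (s : ℤ × ℤ) (_ : s ≠ 0) => Ms s) s hs)
        rintro x ⟨w, hw, rfl⟩
        have := hzmap s 0 w (hW hw)
        simpa using this
    have hdisj : Disjoint (Ms 0) V := hgrad.submodule_iSupIndep 0
    have hmod : Ms 0 ⊓ (W ⊔ V) = W := by
      rw [inf_comm, sup_inf_assoc_of_le V hW, inf_comm V (Ms 0),
        disjoint_iff.mp hdisj, sup_bot_eq]
    have : Ms 0 ≤ W := by
      calc Ms 0 = Ms 0 ⊓ U := by rw [htop, inf_top_eq]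
      _ ≤ Ms 0 ⊓ (W ⊔ V) := inf_le_inf_left _ hUle
      _ = W := hmod
    exact le_antisymm hW this
end

section
/- Let V be a complex vector space with a T-family T such that V is T-simple, and let k ≥ 2. If there exists a nonzero vector v ∈ V such that Δ_k(r; u₁,…,u_k)(v) = 0 for all r, u₁,…,u_k ∈ Γ, then Δ_k(r; u₁,…,u_k)(w) = 0 for all w ∈ V and all r, u₁,…,u_k ∈ Γ. -/
/-- A T-family on a complex vector space `V`: `T 0 = 0` and
`⁅T r, T s⁆ = det(r,s)·(T(r+s) − T r − T s)`. -/
def IsTFamily {V : Type*} [AddCommGroup V] [Module ℂ V]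
    (T : ℤ × ℤ → Module.End ℂ V) : Prop :=
  T 0 = 0 ∧ ∀ r s : ℤ × ℤ, ⁅T r, T s⁆ = (Gdet r s : ℂ) • (T (r + s) - T r - T s)

/-- The `k`-th order difference `Δ_k(r; u₁,…,u_k) = Σ_{S ⊆ {1,…,k}} (−1)^{|S|} T(r + Σ_{i∈S} uᵢ)`. -/
noncomputable def Δ {V : Type*} [AddCommGroup V] [Module ℂ V]
    (T : ℤ × ℤ → Module.End ℂ V) (k : ℕ) (r : ℤ × ℤ) (u : Fin k → ℤ × ℤ) :
    Module.End ℂ V :=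
  ∑ S : Finset (Fin k), ((-1 : ℂ) ^ S.card) • T (r + ∑ i ∈ S, u i)

-- split a sum over all finsets of Fin k at index i
lemma sum_split {M : Type*} [AddCommMonoid M] {k : ℕ} (i : Fin k) (f : Finset (Fin k) → M) :
    ∑ S : Finset (Fin k), f S
      = ∑ S ∈ (Finset.univ.erase i).powerset, f S
        + ∑ S ∈ (Finset.univ.erase i).powerset, f (insert i S) := by
  conv_lhs => rw [← Finset.powerset_univ, ← Finset.insert_erase (Finset.mem_univ i)]
  rw [Finset.sum_powerset_insert (Finset.notMem_erase i _)]

lemma signsumC {α : Type*} [DecidableEq α] {x : Finset α} (h : x.Nonempty) :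
    ∑ S ∈ x.powerset, ((-1 : ℂ) ^ S.card) = 0 := by
  have := Finset.sum_powerset_neg_one_pow_card_of_nonempty h
  have h2 : ((∑ m ∈ x.powerset, (-1 : ℤ) ^ m.card : ℤ) : ℂ) = 0 := by rw [this]; norm_num
  push_cast at h2
  exact h2

lemma signsum_univ {k : ℕ} (hk : 1 ≤ k) :
    ∑ S : Finset (Fin k), ((-1 : ℂ) ^ S.card) = 0 := by
  rw [← Finset.powerset_univ]
  exact signsumC (Finset.univ_nonempty_iff.mpr (Fin.pos_iff_nonempty.mp hk))

lemma key {V : Type*} [AddCommGroup V] [Module ℂ V]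
    (T : ℤ × ℤ → Module.End ℂ V) (hT : IsTFamily T)
    (k : ℕ) (hk : 2 ≤ k) (w : V)
    (hw : ∀ (r : ℤ × ℤ) (u : Fin k → ℤ × ℤ), Δ T k r u w = 0) (s r : ℤ × ℤ)
    (u : Fin k → ℤ × ℤ) :
    Δ T k r u (T s w) = 0 := by
  classical
  have hwv : ∀ (r' : ℤ × ℤ) (u' : Fin k → ℤ × ℤ),
      ∑ S : Finset (Fin k), ((-1 : ℂ) ^ S.card) • T (r' + ∑ i ∈ S, u' i) w = 0 := by
    intro r' u'
    simpa [Δ, LinearMap.sum_apply, LinearMap.smul_apply] using hw r' u'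
  have comm : ∀ t : ℤ × ℤ, T t (T s w)
      = T s (T t w) + (Gdet t s : ℂ) • (T (t + s) w - T t w - T s w) := by
    intro t
    have h := congrArg (fun f : Module.End ℂ V => f w) (hT.2 t s)
    simp only [Ring.lie_def, LinearMap.sub_apply, Module.End.mul_apply,
      LinearMap.smul_apply] at h
    rw [sub_eq_iff_eq_add] at h
    rw [h, add_comm]
  have hdet : ∀ S : Finset (Fin k),
      (Gdet (r + ∑ i ∈ S, u i) s : ℂ)
        = (Gdet r s : ℂ) + ∑ i ∈ S, (Gdet (u i) s : ℂ) := by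
    have hadd : ∀ a b : ℤ × ℤ, Gdet (a + b) s = Gdet a s + Gdet b s := by
      intro a b; simp only [Gdet, Prod.fst_add, Prod.snd_add]; ring
    have hsum : ∀ S : Finset (Fin k), Gdet (∑ i ∈ S, u i) s = ∑ i ∈ S, Gdet (u i) s := by
      intro S
      induction S using Finset.induction_on with
      | empty => simp [Gdet]
      | insert _ _ hmem ih => rw [Finset.sum_insert hmem, Finset.sum_insert hmem, hadd, ih]
    intro S
    rw [hadd, hsum]
    push_cast
    ring
  have expand : Δ T k r u (T s w)
      = ∑ S : Finset (Fin k), ((-1 : ℂ) ^ S.card) • T (r + ∑ i ∈ S, u i) (T s w) := by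
    simp [Δ, LinearMap.sum_apply, LinearMap.smul_apply]
  rw [expand]
  have step1 : ∀ S : Finset (Fin k),
      ((-1 : ℂ) ^ S.card) • T (r + ∑ i ∈ S, u i) (T s w)
      = ((-1 : ℂ) ^ S.card) • T s (T (r + ∑ i ∈ S, u i) w)
        + (((-1 : ℂ) ^ S.card) • ((Gdet r s : ℂ) •
            (T ((r + ∑ i ∈ S, u i) + s) w - T (r + ∑ i ∈ S, u i) w - T s w))
          + ∑ i ∈ S, (Gdet (u i) s : ℂ) • (((-1 : ℂ) ^ S.card) •
            (T ((r + ∑ i ∈ S, u i) + s) w - T (r + ∑ i ∈ S, u i) w - T s w))) := by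
    intro S
    rw [comm, hdet S, smul_add]
    congr 1
    rw [add_smul, smul_add]
    congr 1
    rw [smul_comm ((-1 : ℂ) ^ S.card), Finset.sum_smul]
  rw [Finset.sum_congr rfl fun S _ => step1 S, Finset.sum_add_distrib,
    Finset.sum_add_distrib]
  have hk1 : 1 ≤ k := le_trans (by norm_num) hk
  -- first sum is zero
  have first : ∑ S : Finset (Fin k), ((-1 : ℂ) ^ S.card) • T s (T (r + ∑ i ∈ S, u i) w)
      = 0 := by
    have h1 : ∑ S : Finset (Fin k), ((-1 : ℂ) ^ S.card) • T s (T (r + ∑ i ∈ S, u i) w)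
        = T s (∑ S : Finset (Fin k), ((-1 : ℂ) ^ S.card) • T (r + ∑ i ∈ S, u i) w) := by
      rw [map_sum]
      exact Finset.sum_congr rfl fun S _ => (map_smul _ _ _).symm
    rw [h1, hwv r u, map_zero]
  -- second sum is zero
  have second : ∑ S : Finset (Fin k), ((-1 : ℂ) ^ S.card) • ((Gdet r s : ℂ) •
      (T ((r + ∑ i ∈ S, u i) + s) w - T (r + ∑ i ∈ S, u i) w - T s w)) = 0 := by
    have h1 : ∑ S : Finset (Fin k), ((-1 : ℂ) ^ S.card) • ((Gdet r s : ℂ) •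
        (T ((r + ∑ i ∈ S, u i) + s) w - T (r + ∑ i ∈ S, u i) w - T s w))
        = (Gdet r s : ℂ) • ∑ S : Finset (Fin k), ((-1 : ℂ) ^ S.card) •
            (T ((r + ∑ i ∈ S, u i) + s) w - T (r + ∑ i ∈ S, u i) w - T s w) := by
      rw [Finset.smul_sum]
      exact Finset.sum_congr rfl fun S _ => smul_comm _ _ _
    have h2 : ∑ S : Finset (Fin k), ((-1 : ℂ) ^ S.card) •
        (T ((r + ∑ i ∈ S, u i) + s) w - T (r + ∑ i ∈ S, u i) w - T s w) = 0 := by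
      have hy1 : ∑ S : Finset (Fin k), ((-1 : ℂ) ^ S.card) •
          (T ((r + ∑ i ∈ S, u i) + s) w - T (r + ∑ i ∈ S, u i) w - T s w)
          = (∑ S : Finset (Fin k), ((-1 : ℂ) ^ S.card) • T ((r + s) + ∑ i ∈ S, u i) w)
            - (∑ S : Finset (Fin k), ((-1 : ℂ) ^ S.card) • T (r + ∑ i ∈ S, u i) w)
            - (∑ S : Finset (Fin k), ((-1 : ℂ) ^ S.card)) • T s w := by
        rw [Finset.sum_smul, ← Finset.sum_sub_distrib, ← Finset.sum_sub_distrib]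
        refine Finset.sum_congr rfl fun S _ => ?_
        rw [smul_sub, smul_sub, add_right_comm]
      rw [hy1, hwv (r + s) u, hwv r u, signsum_univ hk1, zero_smul, sub_zero, sub_zero]
    rw [h1, h2, smul_zero]
  -- third sum is zero
  have third : ∑ S : Finset (Fin k), ∑ i ∈ S, (Gdet (u i) s : ℂ) • (((-1 : ℂ) ^ S.card) •
      (T ((r + ∑ i ∈ S, u i) + s) w - T (r + ∑ i ∈ S, u i) w - T s w)) = 0 := by
    rw [Finset.sum_comm' (s := Finset.univ) (t := fun S => S) (t' := Finset.univ)
      (s' := fun i => Finset.univ.filter (fun S => i ∈ S))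
      (by intro S i; simp [Finset.mem_filter, and_comm])]
    refine Finset.sum_eq_zero fun i _ => ?_
    rw [← Finset.smul_sum]
    suffices hinner : ∑ S ∈ Finset.univ.filter (fun S => i ∈ S),
        ((-1 : ℂ) ^ S.card) •
          (T ((r + ∑ j ∈ S, u j) + s) w - T (r + ∑ j ∈ S, u j) w - T s w) = 0 by
      rw [hinner, smul_zero]
    have hne : ∀ S ∈ (Finset.univ.erase i).powerset, i ∉ S := by
      intro S hS hmem
      exact Finset.notMem_erase i _ (Finset.mem_powerset.mp hS hmem)
    have hfilter : ∑ S ∈ Finset.univ.filter (fun S => i ∈ S), ((-1 : ℂ) ^ S.card) •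
          (T ((r + ∑ j ∈ S, u j) + s) w - T (r + ∑ j ∈ S, u j) w - T s w)
        = ∑ S ∈ (Finset.univ.erase i).powerset,
            ((-1 : ℂ) ^ (insert i S).card) •
              (T ((r + ∑ j ∈ insert i S, u j) + s) w
                - T (r + ∑ j ∈ insert i S, u j) w - T s w) := by
      rw [Finset.sum_filter, sum_split i]
      have hz : ∑ S ∈ (Finset.univ.erase i).powerset,
          (if i ∈ S then ((-1 : ℂ) ^ S.card) •
            (T ((r + ∑ j ∈ S, u j) + s) w - T (r + ∑ j ∈ S, u j) w - T s w) else 0) = 0 :=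
        Finset.sum_eq_zero fun S hS => if_neg (hne S hS)
      rw [hz, zero_add]
      exact Finset.sum_congr rfl fun S hS => if_pos (Finset.mem_insert_self i S)
    rw [hfilter]
    have hcard : (Finset.univ.erase i).card = k - 1 := by
      rw [Finset.card_erase_of_mem (Finset.mem_univ i), Finset.card_univ, Fintype.card_fin]
    have herase_ne : (Finset.univ.erase i).Nonempty := by
      rw [← Finset.card_pos, hcard]; omega
    have hterm : ∀ S ∈ (Finset.univ.erase i).powerset,
        ((-1 : ℂ) ^ (insert i S).card) •
          (T ((r + ∑ j ∈ insert i S, u j) + s) w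
            - T (r + ∑ j ∈ insert i S, u j) w - T s w)
        = -(((-1 : ℂ) ^ S.card) • (T ((r + u i) + (s + ∑ j ∈ S, u j)) w
            - T ((r + u i) + ∑ j ∈ S, u j) w - T s w)) := by
      intro S hS
      have hiS : i ∉ S := hne S hS
      rw [Finset.card_insert_of_notMem hiS, Finset.sum_insert hiS, pow_succ,
        mul_neg_one, neg_smul, neg_inj,
        show r + (u i + ∑ j ∈ S, u j) = (r + u i) + ∑ j ∈ S, u j from by abel,
        show ((r + u i) + ∑ j ∈ S, u j) + s = (r + u i) + (s + ∑ j ∈ S, u j) from by abel]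
    rw [Finset.sum_congr rfl hterm, Finset.sum_neg_distrib, neg_eq_zero]
    have hsplit : ∑ S ∈ (Finset.univ.erase i).powerset,
        ((-1 : ℂ) ^ S.card) • (T ((r + u i) + (s + ∑ j ∈ S, u j)) w
            - T ((r + u i) + ∑ j ∈ S, u j) w - T s w)
        = (∑ S ∈ (Finset.univ.erase i).powerset,
            ((-1 : ℂ) ^ S.card) • T ((r + u i) + (s + ∑ j ∈ S, u j)) w)
          - (∑ S ∈ (Finset.univ.erase i).powerset,
            ((-1 : ℂ) ^ S.card) • T ((r + u i) + ∑ j ∈ S, u j) w)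
          - (∑ S ∈ (Finset.univ.erase i).powerset, ((-1 : ℂ) ^ S.card)) • T s w := by
      rw [Finset.sum_smul, ← Finset.sum_sub_distrib, ← Finset.sum_sub_distrib]
      refine Finset.sum_congr rfl fun S _ => ?_
      rw [smul_sub, smul_sub]
    rw [hsplit, signsumC herase_ne, zero_smul, sub_zero, sub_eq_zero]
    have h := hwv (r + u i) (Function.update u i s)
    rw [sum_split i] at h
    have e1 : ∀ S ∈ (Finset.univ.erase i).powerset,
        ((-1 : ℂ) ^ S.card) • T ((r + u i) + ∑ j ∈ S, Function.update u i s j) w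
        = ((-1 : ℂ) ^ S.card) • T ((r + u i) + ∑ j ∈ S, u j) w := by
      intro S hS
      have hsum : ∑ j ∈ S, Function.update u i s j = ∑ j ∈ S, u j :=
        Finset.sum_congr rfl fun j hj =>
          Function.update_of_ne (fun hji => hne S hS (by rwa [hji] at hj)) _ _
      rw [hsum]
    have e2 : ∀ S ∈ (Finset.univ.erase i).powerset,
        ((-1 : ℂ) ^ (insert i S).card) •
            T ((r + u i) + ∑ j ∈ insert i S, Function.update u i s j) w
        = -(((-1 : ℂ) ^ S.card) • T ((r + u i) + (s + ∑ j ∈ S, u j)) w) := by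
      intro S hS
      have hiS : i ∉ S := hne S hS
      have hsum : ∑ j ∈ S, Function.update u i s j = ∑ j ∈ S, u j :=
        Finset.sum_congr rfl fun j hj =>
          Function.update_of_ne (fun hji => hiS (by rwa [hji] at hj)) _ _
      rw [Finset.card_insert_of_notMem hiS, Finset.sum_insert hiS, pow_succ,
        mul_neg_one, neg_smul, Function.update_self, hsum]
    rw [Finset.sum_congr rfl e1, Finset.sum_congr rfl e2, Finset.sum_neg_distrib] at h
    have h2 := sub_eq_zero.mp (by rw [← sub_eq_add_neg] at h; exact h)
    exact h2.symm
  rw [first, second, third, add_zero, add_zero]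

/-- `V` is `T`-simple: the only subspaces invariant under every `T r` are `0` and `V`. -/
def IsTSimple {V : Type*} [AddCommGroup V] [Module ℂ V]
    (T : ℤ × ℤ → Module.End ℂ V) : Prop :=
  ∀ W : Submodule ℂ V, (∀ r : ℤ × ℤ, ∀ v ∈ W, T r v ∈ W) → W = ⊥ ∨ W = ⊤

/-- on a `T`-simple module, if the `k`-th order differences
(`k ≥ 2`) kill some nonzero vector, then they kill everything. -/
theorem stmt6 {V : Type*} [AddCommGroup V] [Module ℂ V]
    (T : ℤ × ℤ → Module.End ℂ V) (hT : IsTFamily T) (hs : IsTSimple T)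
    (k : ℕ) (hk : 2 ≤ k) (v : V) (hv : v ≠ 0)
    (hkill : ∀ (r : ℤ × ℤ) (u : Fin k → ℤ × ℤ), Δ T k r u v = 0) :
    ∀ (w : V) (r : ℤ × ℤ) (u : Fin k → ℤ × ℤ), Δ T k r u w = 0 := by
  let W : Submodule ℂ V :=
  { carrier := {w | ∀ (r : ℤ × ℤ) (u : Fin k → ℤ × ℤ), Δ T k r u w = 0}
    add_mem' := by
      intro a b ha hb r u
      rw [map_add, ha r u, hb r u, add_zero]
    zero_mem' := by
      intro r u
      exact map_zero _
    smul_mem' := by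
      intro c x hx r u
      rw [map_smul, hx r u, smul_zero] }
  have hmem : ∀ x : V, x ∈ W ↔ ∀ (r : ℤ × ℤ) (u : Fin k → ℤ × ℤ), Δ T k r u x = 0 :=
    fun x => Iff.rfl
  have hinv : ∀ s : ℤ × ℤ, ∀ x ∈ W, T s x ∈ W := by
    intro s x hx
    rw [hmem] at hx ⊢
    intro r u
    exact key T hT k hk x hx s r u
  rcases hs W hinv with hbot | htop
  · exfalso
    apply hv
    have : v ∈ W := (hmem v).mpr hkill
    rw [hbot] at this
    simpa using this
  · intro w r u
    have : w ∈ W := by rw [htop]; trivial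
    exact (hmem w).mp this r u
end

section
/- Let V be a complex vector space with a T-family T. Then for every integer k ≥ 2 and all r, s, u₁,…,u_k ∈ Γ: ⁅T(r), Δ_k(s; u₁,…,u_k)⁆ = det(s,r)·Δ_{k+1}(s; u₁,…,u_k, r) + Σ_{i=1}^{k} det(r,u_i)·Δ_k(s+u_i; u₁,…,û_i,…,u_k, r), where û_i means u_i is omitted from the list. -/
open Finset

lemma Gdet_skew (r s : ℤ × ℤ) : Gdet s r = - Gdet r s := by simp [Gdet]; ring

lemma Gdet_sum {k : ℕ} (r s : ℤ × ℤ) (u : Fin k → ℤ × ℤ) (S : Finset (Fin k)) :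
    Gdet r (s + ∑ i ∈ S, u i) = Gdet r s + ∑ i ∈ S, Gdet r (u i) := by
  simp only [Gdet, Prod.fst_add, Prod.snd_add, Prod.fst_sum, Prod.snd_sum,
    mul_add, Finset.mul_sum, Finset.sum_sub_distrib]
  ring

lemma sign_sum_zero {k : ℕ} (hk : 1 ≤ k) :
    ∑ S : Finset (Fin k), (-1 : ℂ) ^ S.card = 0 := by
  have h : ∑ S ∈ (univ : Finset (Fin k)).powerset, (-1 : ℤ) ^ S.card = 0 := by
    rw [Finset.sum_powerset_neg_one_pow_card, if_neg]
    simp [← Finset.card_eq_zero]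
    omega
  rw [Finset.powerset_univ] at h
  have := congrArg (fun z : ℤ => (z : ℂ)) h
  push_cast at this
  simpa using this

lemma sign_sum_notmem_zero {k : ℕ} (hk : 2 ≤ k) (i : Fin k) :
    ∑ S ∈ univ.filter (fun S : Finset (Fin k) => i ∉ S), (-1 : ℂ) ^ S.card = 0 := by
  have hset : univ.filter (fun S : Finset (Fin k) => i ∉ S)
      = ((univ : Finset (Fin k)).erase i).powerset := by
    ext S
    simp [Finset.subset_erase, Finset.subset_univ]
  rw [hset]
  have h : ∑ S ∈ ((univ : Finset (Fin k)).erase i).powerset, (-1 : ℤ) ^ S.card = 0 := by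
    rw [Finset.sum_powerset_neg_one_pow_card, if_neg]
    rw [← Finset.card_eq_zero, Finset.card_erase_of_mem (Finset.mem_univ i)]
    simp only [Finset.card_univ, Fintype.card_fin]
    omega
  have := congrArg (fun z : ℤ => (z : ℂ)) h
  push_cast at this
  simpa using this

lemma sign_sum_mem_zero {k : ℕ} (hk : 2 ≤ k) (i : Fin k) :
    ∑ S ∈ univ.filter (fun S : Finset (Fin k) => i ∈ S), (-1 : ℂ) ^ S.card = 0 := by
  have h := Finset.sum_filter_add_sum_filter_not (univ : Finset (Finset (Fin k)))
    (fun S => i ∈ S) (fun S => (-1 : ℂ) ^ S.card)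
  rw [sign_sum_notmem_zero hk i, sign_sum_zero (by omega)] at h
  linear_combination h
@[simp] lemma castLE_succ_eq_castSucc {k : ℕ} (h : k ≤ k + 1) (x : Fin k) :
    Fin.castLE h x = x.castSucc := rfl

lemma last_not_mem_map {k : ℕ} (A : Finset (Fin k)) :
    Fin.last k ∉ A.map Fin.castSuccEmb := by
  simp only [Finset.mem_map, Fin.castSuccEmb, Fin.castAddEmb, Function.Embedding.coeFn_mk,
    castLE_succ_eq_castSucc]
  rintro ⟨a, -, ha⟩
  exact (Fin.castSucc_lt_last a).ne ha

lemma filter_map_eq {k : ℕ} (S' : Finset (Fin (k+1))) (h : Fin.last k ∉ S') :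
    (Finset.univ.filter fun a : Fin k => a.castSucc ∈ S').map Fin.castSuccEmb = S' := by
  ext j
  induction j using Fin.lastCases with
  | last =>
    simp only [last_not_mem_map, h, iff_false]
  | cast i =>
    simp [(Fin.castSucc_injective k).eq_iff]
  
lemma filter_map_eq' {k : ℕ} (S' : Finset (Fin (k+1))) (h : Fin.last k ∈ S') :
    insert (Fin.last k) ((Finset.univ.filter fun a : Fin k => a.castSucc ∈ S').map Fin.castSuccEmb) = S' := by
  ext j
  induction j using Fin.lastCases with
  | last => simp [h]
  | cast i =>
    simp [(Fin.castSucc_injective k).eq_iff, (Fin.castSucc_lt_last i).ne]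

lemma delta_snoc {V : Type*} [AddCommGroup V] [Module ℂ V]
    (T : ℤ × ℤ → Module.End ℂ V) (k : ℕ) (r s : ℤ × ℤ) (u : Fin k → ℤ × ℤ) :
    Δ T (k+1) s (Fin.snoc u r)
      = (∑ S : Finset (Fin k), ((-1 : ℂ) ^ S.card) • T (s + ∑ i ∈ S, u i))
        - ∑ S : Finset (Fin k), ((-1 : ℂ) ^ S.card) • T (s + (r + ∑ i ∈ S, u i)) := by
  classical
  unfold Δ
  rw [← Finset.sum_filter_add_sum_filter_not (Finset.univ : Finset (Finset (Fin (k+1))))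
    (fun S => Fin.last k ∈ S) (fun S => ((-1 : ℂ) ^ S.card) • T (s + ∑ i ∈ S, Fin.snoc u r i))]
  have h2 : ∑ S' ∈ Finset.univ.filter (fun S : Finset (Fin (k+1)) => ¬ Fin.last k ∈ S),
        ((-1 : ℂ) ^ S'.card) • T (s + ∑ i ∈ S', Fin.snoc u r i)
      = ∑ S : Finset (Fin k), ((-1 : ℂ) ^ S.card) • T (s + ∑ i ∈ S, u i) := by
    refine Finset.sum_nbij' (fun S' => Finset.univ.filter fun a : Fin k => a.castSucc ∈ S')
      (fun A => A.map Fin.castSuccEmb) (fun _ _ => Finset.mem_univ _)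
      (fun A _ => by simpa using last_not_mem_map A)
      (fun S' hS' => filter_map_eq S' (by simpa using hS'))
      (fun A _ => by ext a; simp [(Fin.castSucc_injective k).eq_iff])
      (fun S' hS' => ?_)
    conv_lhs => rw [← filter_map_eq S' (by simpa using hS')]
    rw [Finset.card_map, Finset.sum_map]
    simp
  have h1 : ∑ S' ∈ Finset.univ.filter (fun S : Finset (Fin (k+1)) => Fin.last k ∈ S),
        ((-1 : ℂ) ^ S'.card) • T (s + ∑ i ∈ S', Fin.snoc u r i)
      = - ∑ S : Finset (Fin k), ((-1 : ℂ) ^ S.card) • T (s + (r + ∑ i ∈ S, u i)) := by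
    rw [← Finset.sum_neg_distrib]
    refine Finset.sum_nbij' (fun S' => Finset.univ.filter fun a : Fin k => a.castSucc ∈ S')
      (fun A => insert (Fin.last k) (A.map Fin.castSuccEmb)) (fun _ _ => Finset.mem_univ _)
      (fun A _ => by simp)
      (fun S' hS' => filter_map_eq' S' (by simpa using hS'))
      (fun A _ => by
        ext a
        simp [(Fin.castSucc_injective k).eq_iff, (Fin.castSucc_lt_last a).ne])
      (fun S' hS' => ?_)
    conv_lhs => rw [← filter_map_eq' S' (by simpa using hS')]
    rw [Finset.card_insert_of_notMem (last_not_mem_map _),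
      Finset.sum_insert (last_not_mem_map _), Finset.sum_map]
    simp only [Finset.card_map, pow_succ, mul_neg_one, neg_smul, Fin.snoc_last]
    congr 2
    simp
  rw [h1, h2]
  abel
lemma delta_update {V : Type*} [AddCommGroup V] [Module ℂ V]
    (T : ℤ × ℤ → Module.End ℂ V) (k : ℕ) (r s : ℤ × ℤ) (u : Fin k → ℤ × ℤ) (i : Fin k) :
    Δ T k (s + u i) (Function.update u i r)
      = (∑ S ∈ Finset.univ.filter (fun S : Finset (Fin k) => i ∈ S),
          ((-1 : ℂ) ^ S.card) • T (r + (s + ∑ j ∈ S, u j)))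
        - ∑ S ∈ Finset.univ.filter (fun S : Finset (Fin k) => i ∈ S),
          ((-1 : ℂ) ^ S.card) • T (s + ∑ j ∈ S, u j) := by
  classical
  unfold Δ
  rw [← Finset.sum_filter_add_sum_filter_not (Finset.univ : Finset (Finset (Fin k)))
    (fun S => i ∈ S) (fun S => ((-1 : ℂ) ^ S.card) • T (s + u i + ∑ j ∈ S, Function.update u i r j))]
  have h1 : ∑ S ∈ Finset.univ.filter (fun S : Finset (Fin k) => i ∈ S),
        ((-1 : ℂ) ^ S.card) • T (s + u i + ∑ j ∈ S, Function.update u i r j)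
      = ∑ S ∈ Finset.univ.filter (fun S : Finset (Fin k) => i ∈ S),
          ((-1 : ℂ) ^ S.card) • T (r + (s + ∑ j ∈ S, u j)) := by
    refine Finset.sum_congr rfl fun S hS => ?_
    have hiS : i ∈ S := by simpa using hS
    rw [Finset.sum_update_of_mem hiS]
    congr 2
    have herase : u i + ∑ j ∈ S.erase i, u j = ∑ j ∈ S, u j :=
      Finset.add_sum_erase S u hiS
    rw [Finset.sdiff_singleton_eq_erase] at *
    rw [← herase]
    abel
  have h2 : ∑ S ∈ Finset.univ.filter (fun S : Finset (Fin k) => ¬ i ∈ S),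
        ((-1 : ℂ) ^ S.card) • T (s + u i + ∑ j ∈ S, Function.update u i r j)
      = - ∑ S ∈ Finset.univ.filter (fun S : Finset (Fin k) => i ∈ S),
          ((-1 : ℂ) ^ S.card) • T (s + ∑ j ∈ S, u j) := by
    rw [← Finset.sum_neg_distrib]
    refine Finset.sum_nbij' (fun S => insert i S) (fun S => S.erase i)
      (fun S hS => by simp) (fun S hS => by simp)
      (fun S hS => Finset.erase_insert (by simpa using hS))
      (fun S hS => Finset.insert_erase (by simpa using hS))
      (fun S hS => ?_)
    have hiS : i ∉ S := by simpa using hS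
    rw [Finset.card_insert_of_notMem hiS, Finset.sum_insert hiS, pow_succ, mul_neg_one,
      neg_smul, neg_neg]
    have hupd : ∑ j ∈ S, Function.update u i r j = ∑ j ∈ S, u j :=
      Finset.sum_congr rfl fun j hj =>
        Function.update_of_ne (ne_of_mem_of_not_mem hj hiS) r u
    rw [hupd]
    congr 1
    abel
  rw [h1, h2]
  abel
lemma sum_swap_mem {M : Type*} [AddCommMonoid M] {k : ℕ} (f : Fin k → Finset (Fin k) → M) :
    ∑ S : Finset (Fin k), ∑ j ∈ S, f j S
      = ∑ j : Fin k, ∑ S ∈ Finset.univ.filter (fun S : Finset (Fin k) => j ∈ S), f j S := by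
  classical
  have h1 : ∀ S : Finset (Fin k), ∑ j ∈ S, f j S
      = ∑ j : Fin k, if j ∈ S then f j S else 0 := by
    intro S
    rw [← Finset.sum_filter]
    apply Finset.sum_congr _ (fun _ _ => rfl)
    ext j; simp
  simp_rw [h1, Finset.sum_filter]
  exact Finset.sum_comm


/-- commutator formula
`⁅T r, Δ_k(s; u₁,…,u_k)⁆ = det(s,r)·Δ_{k+1}(s; u₁,…,u_k, r)
  + Σᵢ det(r,uᵢ)·Δ_k(s+uᵢ; u₁,…,ûᵢ,…,u_k, r)`.
Here the list `u₁,…,ûᵢ,…,u_k, r` (with `uᵢ` omitted and `r` appended) is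
realized, up to a permutation (under which `Δ_k` is invariant), as
`Function.update u i r`. -/
theorem stmt7 {V : Type*} [AddCommGroup V] [Module ℂ V]
    (T : ℤ × ℤ → Module.End ℂ V) (hT : IsTFamily T)
    (k : ℕ) (hk : 2 ≤ k) (r s : ℤ × ℤ) (u : Fin k → ℤ × ℤ) :
    ⁅T r, Δ T k s u⁆
      = (Gdet s r : ℂ) • Δ T (k + 1) s (Fin.snoc u r)
        + ∑ i : Fin k, (Gdet r (u i) : ℂ) • Δ T k (s + u i) (Function.update u i r) := by
  classical
  obtain ⟨-, hcomm⟩ := hT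
  -- Step 1: expand the bracket
  have key : ⁅T r, Δ T k s u⁆
      = ∑ S : Finset (Fin k), ((-1 : ℂ) ^ S.card) •
          ((((Gdet r s : ℂ)) + ∑ j ∈ S, (Gdet r (u j) : ℂ)) •
            (T (r + (s + ∑ j ∈ S, u j)) - T r - T (s + ∑ j ∈ S, u j))) := by
    unfold Δ
    rw [Ring.lie_def, Finset.mul_sum, Finset.sum_mul, ← Finset.sum_sub_distrib]
    refine Finset.sum_congr rfl fun S _ => ?_
    rw [mul_smul_comm, smul_mul_assoc, ← smul_sub, ← Ring.lie_def, hcomm, Gdet_sum]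
    push_cast
    rfl
  rw [key]
  -- Step 2: split each summand
  have split : ∀ S : Finset (Fin k), ((-1 : ℂ) ^ S.card) •
        ((((Gdet r s : ℂ)) + ∑ j ∈ S, (Gdet r (u j) : ℂ)) •
          (T (r + (s + ∑ j ∈ S, u j)) - T r - T (s + ∑ j ∈ S, u j)))
      = (Gdet r s : ℂ) • (((-1 : ℂ) ^ S.card) •
            (T (r + (s + ∑ j ∈ S, u j)) - T (s + ∑ j ∈ S, u j)))
        + (∑ j ∈ S, (Gdet r (u j) : ℂ) • (((-1 : ℂ) ^ S.card) •
            (T (r + (s + ∑ j ∈ S, u j)) - T (s + ∑ j ∈ S, u j))))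
        - (((-1 : ℂ) ^ S.card) * (((Gdet r s : ℂ)) + ∑ j ∈ S, (Gdet r (u j) : ℂ))) • T r := by
    intro S
    rw [← Finset.sum_smul]
    module
  simp only [split]
  rw [Finset.sum_sub_distrib, Finset.sum_add_distrib, ← Finset.smul_sum, ← Finset.sum_smul]
  -- Step 3: the T r coefficient vanishes
  have hcoef : ∑ S : Finset (Fin k),
      (((-1 : ℂ) ^ S.card) * (((Gdet r s : ℂ)) + ∑ j ∈ S, (Gdet r (u j) : ℂ))) = 0 := by
    simp_rw [mul_add, Finset.mul_sum]
    rw [Finset.sum_add_distrib, ← Finset.sum_mul, sign_sum_zero (by omega : 1 ≤ k), zero_mul,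
      sum_swap_mem (f := fun j S => ((-1 : ℂ) ^ S.card) * (Gdet r (u j) : ℂ))]
    rw [zero_add]
    refine Finset.sum_eq_zero fun j _ => ?_
    rw [← Finset.sum_mul, sign_sum_mem_zero hk j, zero_mul]
  rw [hcoef, zero_smul, sub_zero]
  -- Step 4: swap the double sum in the middle term
  rw [sum_swap_mem (f := fun j S => (Gdet r (u j) : ℂ) • (((-1 : ℂ) ^ S.card) •
      (T (r + (s + ∑ j ∈ S, u j)) - T (s + ∑ j ∈ S, u j))))]
  have hmid : ∀ j : Fin k, ∑ S ∈ Finset.univ.filter (fun S : Finset (Fin k) => j ∈ S),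
        (Gdet r (u j) : ℂ) • (((-1 : ℂ) ^ S.card) •
          (T (r + (s + ∑ j ∈ S, u j)) - T (s + ∑ j ∈ S, u j)))
      = (Gdet r (u j) : ℂ) • ∑ S ∈ Finset.univ.filter (fun S : Finset (Fin k) => j ∈ S),
          (((-1 : ℂ) ^ S.card) •
            (T (r + (s + ∑ j ∈ S, u j)) - T (s + ∑ j ∈ S, u j))) :=
    fun j => (Finset.smul_sum).symm
  simp only [hmid]
  -- Step 5: rewrite the RHS
  rw [delta_snoc]
  simp only [delta_update, Gdet_skew r s, Int.cast_neg, smul_sub, Finset.sum_sub_distrib,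
    add_left_comm s r]
  module
end

section
/- Let M be a complex vector space with an (𝔄,𝔓)-action (z, H), and set T(r) := z(−r)∘H(r). Then for all r, s ∈ Γ: (i) ⁅T(r), z(s)⁆ = det(r,s)·z(s); (ii) ⁅T(r), H(s)⁆ = det(r,s)·z(s)∘(T(r+s) − T(r)); (iii) ⁅T(r), T(s)⁆ = det(r,s)·(T(r+s) − T(r) − T(s)); and T(0) = 0. -/
lemma Gdet_neg_right (r s : ℤ × ℤ) : Gdet r (-s) = -Gdet r s := by
  simp [Gdet]; ring

lemma Gdet_swap_neg (r s : ℤ × ℤ) : Gdet s (-r) = Gdet r s := by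
  simp [Gdet]; ring

/-- commutation relations for `T r := z (−r) ∘ H r` attached to
an (𝔄,𝔓)-action `(z, H)`. -/
theorem stmt10 {M : Type*} [AddCommGroup M] [Module ℂ M]
    (z H : ℤ × ℤ → Module.End ℂ M)
    (hz0 : z 0 = 1)
    (hzz : ∀ r s : ℤ × ℤ, z r * z s = z (r + s))
    (hH0 : H 0 = 0)
    (hHz : ∀ r s : ℤ × ℤ, ⁅H r, z s⁆ = (Gdet r s : ℂ) • z (r + s))
    (hHH : ∀ r s : ℤ × ℤ, ⁅H r, H s⁆ = (Gdet r s : ℂ) • H (r + s))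
    (T : ℤ × ℤ → Module.End ℂ M) (hTdef : ∀ r : ℤ × ℤ, T r = z (-r) * H r) :
    (∀ r s : ℤ × ℤ, ⁅T r, z s⁆ = (Gdet r s : ℂ) • z s) ∧
    (∀ r s : ℤ × ℤ, ⁅T r, H s⁆ = (Gdet r s : ℂ) • (z s * (T (r + s) - T r))) ∧
    (∀ r s : ℤ × ℤ, ⁅T r, T s⁆ = (Gdet r s : ℂ) • (T (r + s) - T r - T s)) ∧
    T 0 = 0 := by
  -- z commutes with z
  have hzc : ∀ r s : ℤ × ℤ, z r * z s = z s * z r := by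
    intro r s; rw [hzz, hzz, add_comm]
  -- commutation of H past z, as a product identity
  have hHzm : ∀ r s : ℤ × ℤ, H r * z s = z s * H r + (Gdet r s : ℂ) • z (r + s) := by
    intro r s
    have := hHz r s
    rw [Ring.lie_def] at this
    linear_combination (norm := module) this
  have h1 : ∀ r s : ℤ × ℤ, ⁅T r, z s⁆ = (Gdet r s : ℂ) • z s := by
    intro r s
    rw [Ring.lie_def, hTdef, mul_assoc, ← mul_assoc (z s), ← hzc, mul_assoc, ← mul_sub,
      ← Ring.lie_def, hHz, mul_smul_comm, hzz, neg_add_cancel_left]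
  have h2 : ∀ r s : ℤ × ℤ, ⁅T r, H s⁆ = (Gdet r s : ℂ) • (z s * (T (r + s) - T r)) := by
    intro r s
    have key : H s * z (-r) = z (-r) * H s + (Gdet r s : ℂ) • z (s + -r) := by
      rw [hHzm s (-r), Gdet_swap_neg]
    have hHHm : H r * H s = H s * H r + (Gdet r s : ℂ) • H (r + s) := by
      have := hHH r s
      rw [Ring.lie_def] at this
      linear_combination (norm := module) this
    rw [Ring.lie_def, hTdef r]
    have e1 : z (-r) * H r * H s = z (-r) * (H s * H r) + (Gdet r s : ℂ) • (z (-r) * H (r + s)) := by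
      rw [mul_assoc, hHHm, mul_add, mul_smul_comm]
    have e2 : H s * (z (-r) * H r)
        = z (-r) * (H s * H r) + (Gdet r s : ℂ) • (z (s + -r) * H r) := by
      rw [← mul_assoc, key, add_mul, smul_mul_assoc, mul_assoc]
    have hA : s + -(r + s) = -r := by ring
    rw [e1, e2, hTdef (r + s), mul_sub, ← mul_assoc (z s) (z (-(r+s))), ← mul_assoc (z s) (z (-r)), hzz, hzz, hA]
    module
  have lie_mul' : ∀ a b c : Module.End ℂ M, ⁅a, b * c⁆ = ⁅a, b⁆ * c + b * ⁅a, c⁆ := by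
    intro a b c
    simp only [Ring.lie_def]
    noncomm_ring
  refine ⟨h1, h2, ?_, ?_⟩
  · intro r s
    rw [hTdef s, lie_mul', h1, h2]
    have : z (-s) * ((Gdet r s : ℂ) • (z s * (T (r + s) - T r)))
        = (Gdet r s : ℂ) • (T (r + s) - T r) := by
      rw [mul_smul_comm, ← mul_assoc, hzz, neg_add_cancel, hz0, one_mul]
    rw [this, Gdet_neg_right, smul_mul_assoc, ← hTdef s]
    push_cast
    module
  · rw [hTdef, hH0, mul_zero]
end

section
/- Let V be a complex vector space with a T-family T, and let r, s ∈ Γ with det(r,s) = ε where ε = 1 or ε = −1. Define T' : Γ → End_ℂ(V) by T'(u) := ε·T(u₁·r + u₂·s) for u = (u₁,u₂) ∈ Γ. Then T' is again a T-family on V: T'(0) = 0 and ⁅T'(u), T'(v)⁆ = det(u,v)·(T'(u+v) − T'(u) − T'(v)) for all u, v ∈ Γ. -/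
/-- the degree-transform `T'(u) := ε·T(u₁·r + u₂·s)`, for
`det(r,s) = ε = ±1`, is again a T-family. -/
theorem stmt11 {V : Type*} [AddCommGroup V] [Module ℂ V]
    (T : ℤ × ℤ → Module.End ℂ V) (hT : IsTFamily T)
    (r s : ℤ × ℤ) (ε : ℤ) (hε : ε = 1 ∨ ε = -1) (hdet : Gdet r s = ε)
    (T' : ℤ × ℤ → Module.End ℂ V)
    (hT' : ∀ u : ℤ × ℤ, T' u = (ε : ℂ) • T (u.1 • r + u.2 • s)) :
    IsTFamily T' := by
  have hε2 : (ε : ℂ) * ε = 1 := by rcases hε with h | h <;> simp [h]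
  constructor
  · rw [hT' 0]
    simp [hT.1]
  · intro u v
    have key : Gdet (u.1 • r + u.2 • s) (v.1 • r + v.2 • s) = Gdet u v * ε := by
      rw [← hdet]; simp only [Gdet, Prod.fst_add, Prod.snd_add, Prod.smul_fst,
        Prod.smul_snd, smul_eq_mul]; ring
    have hadd : (u + v).1 • r + (u + v).2 • s
        = (u.1 • r + u.2 • s) + (v.1 • r + v.2 • s) := by
      simp only [Prod.fst_add, Prod.snd_add, add_smul]; abel
    letI := LieRing.ofAssociativeRing (A := Module.End ℂ V)
    rw [hT' u, hT' v, hT' (u + v), hadd, smul_lie, lie_smul, smul_smul, hε2,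
      one_smul, hT.2, key]
    push_cast
    simp only [smul_sub, smul_smul]
end

section
/- Let V be a complex vector space with a T-family T, let k ≥ 2, and suppose Δ_{k+1}(r; u₁,…,u_{k+1}) = 0 for all r, u₁,…,u_{k+1} ∈ Γ. For r = (r₁,r₂) ∈ Γ define B(r) : Γ → Γ by B(r)(u₁,u₂) := (−r₁r₂u₁ + r₁²u₂, −r₂²u₁ + r₁r₂u₂). Then for all r, u₁,…,u_k ∈ Γ: ⁅T(r), Δ_k(0; u₁,…,u_k)⁆ = Σ_{i=1}^{k} Δ_k(0; u₁,…,u_{i−1}, B(r)u_i, u_{i+1},…,u_k). -/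
/-- The matrix `B(r) = [[−r₁r₂, r₁²],[−r₂², r₁r₂]]` acting on `Γ`. -/
def Bmat (r : ℤ × ℤ) (u : ℤ × ℤ) : ℤ × ℤ :=
  (-r.1 * r.2 * u.1 + r.1 ^ 2 * u.2, -r.2 ^ 2 * u.1 + r.1 * r.2 * u.2)

open Finset

section Helpers

lemma stmt13_erase_univ_eq_map {n : ℕ} (i : Fin (n+1)) :
    (univ : Finset (Fin (n+1))).erase i = univ.map (i.succAboveEmb) := by
  ext j
  simp only [mem_erase, mem_univ, and_true, mem_map, Fin.succAboveEmb, Function.Embedding.coeFn_mk]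
  constructor
  · intro h
    obtain ⟨z, hz⟩ := Fin.exists_succAbove_eq_iff.2 h
    exact ⟨z, trivial, hz⟩
  · rintro ⟨z, -, rfl⟩
    exact fun h => Fin.succAbove_ne i z h

lemma stmt13_not_mem_map {n : ℕ} (i : Fin (n+1)) (S : Finset (Fin n)) :
    i ∉ S.map (i.succAboveEmb) := by
  intro h
  obtain ⟨z, -, hz⟩ := mem_map.1 h
  exact Fin.succAbove_ne i z hz

lemma stmt13_sum_map_powerset {M : Type*} [AddCommMonoid M] {n : ℕ} (i : Fin (n+1))
    (g : Finset (Fin (n+1)) → M) :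
    ∑ S ∈ ((univ : Finset (Fin (n+1))).erase i).powerset, g S
      = ∑ S : Finset (Fin n), g (S.map (i.succAboveEmb)) := by
  rw [stmt13_erase_univ_eq_map]
  refine (Finset.sum_bij (fun (S : Finset (Fin n)) _ => S.map (i.succAboveEmb)) ?_ ?_ ?_ ?_).symm
  · intro S _; exact mem_powerset.2 (map_subset_map.2 (subset_univ S))
  · intro a _ b _ h; exact map_injective _ h
  · intro S hS
    obtain ⟨u, -, rfl⟩ := Finset.subset_map_iff.1 (mem_powerset.1 hS)
    exact ⟨u, mem_univ u, rfl⟩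
  · intro S _; rfl

lemma stmt13_sum_split {M : Type*} [AddCommMonoid M] {n : ℕ} (i : Fin (n+1))
    (g : Finset (Fin (n+1)) → M) :
    ∑ S : Finset (Fin (n+1)), g S
      = ∑ S : Finset (Fin n),
          (g (S.map (i.succAboveEmb)) + g (insert i (S.map (i.succAboveEmb)))) := by
  have h0 : (univ : Finset (Finset (Fin (n+1)))) = (univ : Finset (Fin (n+1))).powerset :=
    (Finset.powerset_univ).symm
  rw [h0, ← Finset.insert_erase (Finset.mem_univ i),
    Finset.sum_powerset_insert (Finset.notMem_erase i _),
    stmt13_sum_map_powerset, stmt13_sum_map_powerset, ← Finset.sum_add_distrib]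

lemma stmt13_delta_succ {V : Type*} [AddCommGroup V] [Module ℂ V]
    (T : ℤ × ℤ → Module.End ℂ V) {n : ℕ} (a : ℤ × ℤ) (w : Fin (n+1) → ℤ × ℤ)
    (i : Fin (n+1)) :
    Δ T (n+1) a w = Δ T n a (w ∘ i.succAbove) - Δ T n (a + w i) (w ∘ i.succAbove) := by
  unfold Δ
  rw [stmt13_sum_split i, ← Finset.sum_sub_distrib]
  refine Finset.sum_congr rfl fun S _ => ?_
  have hnm := stmt13_not_mem_map i S
  simp only [Finset.card_insert_of_notMem hnm, Finset.sum_insert hnm,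
    Finset.card_map, Finset.sum_map]
  simp only [Fin.succAboveEmb, Function.Embedding.coeFn_mk, Function.comp]
  rw [pow_succ, mul_comm, mul_smul, neg_one_smul]
  rw [show a + (w i + ∑ j ∈ S, w (i.succAbove j)) = a + w i + ∑ j ∈ S, w (i.succAbove j) by ring]
  abel

lemma stmt13_alt_sum_zero {n : ℕ} : ∑ S : Finset (Fin (n+1)), (-1 : ℂ)^S.card = 0 := by
  rw [stmt13_sum_split (0 : Fin (n+1))]
  refine Finset.sum_eq_zero fun S _ => ?_
  rw [Finset.card_insert_of_notMem (stmt13_not_mem_map 0 S), Finset.card_map, pow_succ]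
  ring

lemma stmt13_gdet_sum (r : ℤ × ℤ) {ι : Type*} [DecidableEq ι] (S : Finset ι) (f : ι → ℤ × ℤ) :
    Gdet r (∑ l ∈ S, f l) = ∑ l ∈ S, Gdet r (f l) := by
  induction S using Finset.induction with
  | empty => simp [Gdet]
  | insert _ _ h ih =>
    rw [Finset.sum_insert h, Finset.sum_insert h, ← ih]
    simp only [Gdet, Prod.fst_add, Prod.snd_add]
    ring

end Helpers

/-- if all `(k+1)`-th order differences vanish (`k ≥ 2`), then
the adjoint action of `T r` on `Δ_k(0; u₁,…,u_k)` is by the derivation applying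
`B(r)` in each slot. -/
theorem stmt13 {V : Type*} [AddCommGroup V] [Module ℂ V]
    (T : ℤ × ℤ → Module.End ℂ V) (hT : IsTFamily T)
    (k : ℕ) (hk : 2 ≤ k)
    (hvan : ∀ (r : ℤ × ℤ) (u : Fin (k + 1) → ℤ × ℤ), Δ T (k + 1) r u = 0) :
    ∀ (r : ℤ × ℤ) (u : Fin k → ℤ × ℤ),
      ⁅T r, Δ T k 0 u⁆ = ∑ i : Fin k, Δ T k 0 (Function.update u i (Bmat r (u i))) := by
  intro r u
  obtain ⟨m, rfl⟩ : ∃ m, k = m + 2 := ⟨k - 2, by omega⟩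
  set d : Fin (m+2) → ℤ := fun j => Gdet r (u j) with hd
  have hB : ∀ j : Fin (m+2), Bmat r (u j) = d j • r := by
    intro j
    have : d j • r = (d j * r.1, d j * r.2) := rfl
    rw [this]
    simp only [Bmat, hd, Gdet, Prod.mk.injEq]
    constructor <;> ring
  set F : Fin (m+2) → (ℤ × ℤ) → Module.End ℂ V :=
    fun i a => Δ T (m+1) a (u ∘ i.succAbove) with hF
  -- translation invariance of Δ_{m+2}
  have htrans : ∀ (a y : ℤ × ℤ) (v : Fin (m+2) → ℤ × ℤ),
      Δ T (m+2) (a+y) v = Δ T (m+2) a v := by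
    intro a y v
    have h := hvan a (Fin.snoc v y)
    rw [stmt13_delta_succ T a (Fin.snoc v y) (Fin.last (m+2))] at h
    have e1 : (Fin.snoc v y : Fin (m+2+1) → ℤ × ℤ) ∘ (Fin.last (m+2)).succAbove = v := by
      funext l
      simp [Fin.succAbove_last]
    have e2 : (Fin.snoc v y : Fin (m+2+1) → ℤ × ℤ) (Fin.last (m+2)) = y := Fin.snoc_last _ _
    rw [e1, e2] at h
    exact (sub_eq_zero.mp h).symm
  -- key decomposition
  have hcomp : ∀ (i : Fin (m+2)) (x : ℤ × ℤ),
      (Function.update u i x) ∘ i.succAbove = u ∘ i.succAbove := by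
    intro i x
    funext l
    exact Function.update_of_ne (Fin.succAbove_ne i l) _ _
  have hkey : ∀ (i : Fin (m+2)) (a x : ℤ × ℤ),
      Δ T (m+2) a (Function.update u i x) = F i a - F i (a + x) := by
    intro i a x
    have h := stmt13_delta_succ T a (Function.update u i x) i
    rw [hcomp, Function.update_self] at h
    exact h
  have h2 : ∀ (i : Fin (m+2)) (a x : ℤ × ℤ), F i a - F i (a + x) = F i 0 - F i x := by
    intro i a x
    have h := htrans 0 a (Function.update u i x)
    rw [zero_add, hkey, hkey, zero_add] at h
    exact h
  have hzs : ∀ (i : Fin (m+2)) (c : ℤ) (x : ℤ × ℤ),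
      F i 0 - F i (c • x) = c • (F i 0 - F i x) := by
    intro i c x
    have hadd : ∀ x y : ℤ × ℤ,
        F i 0 - F i (x + y) = (F i 0 - F i x) + (F i 0 - F i y) := by
      intro x y
      have h := h2 i x y
      rw [← h]
      abel
    let g : (ℤ × ℤ) →+ Module.End ℂ V := AddMonoidHom.mk' (fun z => F i 0 - F i z) hadd
    have := map_zsmul g c x
    simpa [g] using this
  have hRHS : ∀ i : Fin (m+2),
      Δ T (m+2) 0 (Function.update u i (Bmat r (u i))) = F i 0 - F i (d i • r) := by
    intro i
    rw [hkey i 0 (Bmat r (u i)), hB i, zero_add]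
  -- LHS expansion
  have hLHS1 : ⁅T r, Δ T (m+2) 0 u⁆
      = ∑ S : Finset (Fin (m+2)), ∑ j ∈ S,
          ((-1:ℂ))^S.card • (d j : ℂ) • (T (r + ∑ l ∈ S, u l) - T r - T (∑ l ∈ S, u l)) := by
    letI := LieRing.ofAssociativeRing (A := Module.End ℂ V)
    unfold Δ
    simp_rw [zero_add]
    refine Eq.trans (map_sum (AddMonoidHom.mk' (fun y : Module.End ℂ V => ⁅T r, y⁆)
      (fun a b => lie_add (T r) a b)) (fun S : Finset (Fin (m+2)) =>
        ((-1:ℂ))^S.card • T (∑ l ∈ S, u l)) univ) ?_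
    simp only [AddMonoidHom.mk'_apply]
    refine Finset.sum_congr rfl fun S _ => ?_
    rw [lie_smul, hT.2, stmt13_gdet_sum]
    rw [show ((↑(∑ l ∈ S, Gdet r (u l)) : ℂ)) = ∑ l ∈ S, ((Gdet r (u l) : ℂ)) by push_cast; rfl]
    rw [Finset.sum_smul, Finset.smul_sum]
  have hj : ∀ j : Fin (m+2),
      (∑ S : Finset (Fin (m+2)), if j ∈ S then
          ((-1:ℂ))^S.card • (d j : ℂ) • (T (r + ∑ l ∈ S, u l) - T r - T (∑ l ∈ S, u l)) else 0)
        = (d j : ℂ) • (F j (u j) - F j (u j + r)) := by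
    intro j
    rw [stmt13_sum_split j]
    have step1 : ∀ S' : Finset (Fin (m+1)),
        ((if j ∈ S'.map (j.succAboveEmb) then
            ((-1:ℂ))^(S'.map (j.succAboveEmb)).card • (d j : ℂ) •
              (T (r + ∑ l ∈ S'.map (j.succAboveEmb), u l) - T r
                - T (∑ l ∈ S'.map (j.succAboveEmb), u l)) else 0)
          + (if j ∈ insert j (S'.map (j.succAboveEmb)) then
            ((-1:ℂ))^(insert j (S'.map (j.succAboveEmb))).card • (d j : ℂ) •
              (T (r + ∑ l ∈ insert j (S'.map (j.succAboveEmb)), u l) - T r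
                - T (∑ l ∈ insert j (S'.map (j.succAboveEmb)), u l)) else 0))
        = (d j : ℂ) • (((-1:ℂ))^S'.card • T (u j + ∑ l ∈ S', u (j.succAbove l)))
          - (d j : ℂ) • (((-1:ℂ))^S'.card • T ((u j + r) + ∑ l ∈ S', u (j.succAbove l)))
          + (d j : ℂ) • (((-1:ℂ))^S'.card • T r) := by
      intro S'
      have hnm := stmt13_not_mem_map j S'
      rw [if_neg hnm, zero_add, if_pos (Finset.mem_insert_self _ _),
        Finset.card_insert_of_notMem hnm, Finset.card_map,
        Finset.sum_insert hnm, Finset.sum_map]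
      simp only [Fin.succAboveEmb, Function.Embedding.coeFn_mk]
      rw [show r + (u j + ∑ l ∈ S', u (j.succAbove l))
            = (u j + r) + ∑ l ∈ S', u (j.succAbove l) by ring, pow_succ]
      module
    rw [Finset.sum_congr rfl fun S' _ => step1 S']
    rw [Finset.sum_add_distrib, Finset.sum_sub_distrib,
      ← Finset.smul_sum, ← Finset.smul_sum, ← Finset.smul_sum]
    have hz : (∑ S' : Finset (Fin (m+1)), ((-1:ℂ))^S'.card • T r) = (0 : Module.End ℂ V) := by
      rw [← Finset.sum_smul, stmt13_alt_sum_zero, zero_smul]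
    rw [hz, smul_zero, add_zero, ← smul_sub]
    congr 1
  -- assemble
  have hswap : ⁅T r, Δ T (m+2) 0 u⁆
      = ∑ j : Fin (m+2), (d j : ℂ) • (F j (u j) - F j (u j + r)) := by
    rw [hLHS1]
    have : ∀ S : Finset (Fin (m+2)),
        (∑ j ∈ S, ((-1:ℂ))^S.card • (d j : ℂ) •
            (T (r + ∑ l ∈ S, u l) - T r - T (∑ l ∈ S, u l)))
        = ∑ j : Fin (m+2), (if j ∈ S then ((-1:ℂ))^S.card • (d j : ℂ) •
            (T (r + ∑ l ∈ S, u l) - T r - T (∑ l ∈ S, u l)) else 0) := by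
      intro S
      rw [Finset.sum_ite_mem, Finset.univ_inter]
    rw [Finset.sum_congr rfl fun S _ => this S, Finset.sum_comm]
    exact Finset.sum_congr rfl fun j _ => hj j
  rw [hswap]
  refine Finset.sum_congr rfl fun j _ => ?_
  rw [h2 j (u j) r, hRHS j, Int.cast_smul_eq_zsmul, hzs j (d j) r]
end

section
/- Let V be a complex vector space with a T-family T, and suppose Δ₃(r; u₁, u₂, u₃) = 0 for all r, u₁, u₂, u₃ ∈ Γ. Then the operator T(1,0) − T(−1,0) commutes with T(s) for every s ∈ Γ: ⁅T(1,0) − T(−1,0), T(s)⁆ = 0. -/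
/-- Explicit expansion of the third-order difference. -/
lemma delta3_expand {V : Type*} [AddCommGroup V] [Module ℂ V]
    (T : ℤ × ℤ → Module.End ℂ V) (r u v w : ℤ × ℤ) :
    Δ T 3 r ![u, v, w] = T r - T (r + u) - T (r + v) - T (r + w)
      + T (r + u + v) + T (r + u + w) + T (r + v + w) - T (r + u + v + w) := by
  rw [Δ, show (Finset.univ : Finset (Finset (Fin 3))) =
    {∅, {0}, {1}, {2}, {0,1}, {0,2}, {1,2}, {0,1,2}} from by decide]
  simp (config := { decide := true }) [Finset.sum_insert, Finset.mem_insert]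
  abel

/-- Second differences are independent of the base point. -/
lemma second_diff {V : Type*} [AddCommGroup V] [Module ℂ V]
    (T : ℤ × ℤ → Module.End ℂ V) (hT : IsTFamily T)
    (hvan : ∀ (r : ℤ × ℤ) (u : Fin 3 → ℤ × ℤ), Δ T 3 r u = 0)
    (r u v : ℤ × ℤ) :
    T (r + u + v) - T (r + u) - T (r + v) + T r = T (u + v) - T u - T v := by
  have h := hvan r ![u, v, -r]
  rw [delta3_expand] at h
  have h0 : T 0 = 0 := hT.1
  have e1 : r + -r = (0 : ℤ × ℤ) := by abel
  have e2 : r + u + -r = u := by abel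
  have e3 : r + v + -r = v := by abel
  have e4 : r + u + v + -r = u + v := by abel
  rw [e1, e2, e3, e4, h0] at h
  linear_combination (norm := abel) h

/-- if all third-order differences vanish, then
`T(1,0) − T(−1,0)` commutes with every `T s`. -/
theorem stmt15 {V : Type*} [AddCommGroup V] [Module ℂ V]
    (T : ℤ × ℤ → Module.End ℂ V) (hT : IsTFamily T)
    (hvan : ∀ (r : ℤ × ℤ) (u : Fin 3 → ℤ × ℤ), Δ T 3 r u = 0) :
    ∀ s : ℤ × ℤ, ⁅T (1, 0) - T (-1, 0), T s⁆ = 0 := by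
  intro s
  have key := second_diff T hT hvan s (1, 0) (-1, 0)
  have h0 : T 0 = 0 := hT.1
  have e0 : s + (1, 0) + (-1, 0) = s := by obtain ⟨a, b⟩ := s; simp [Prod.ext_iff]
  have e1 : (1, 0) + (-1, 0) = (0 : ℤ × ℤ) := by decide
  rw [e0, e1, h0] at key
  -- key : T s - T (s + (1,0)) - T (s + (-1,0)) + T s = 0 - T (1,0) - T (-1,0)
  have b1 := hT.2 (1, 0) s
  have b2 := hT.2 (-1, 0) s
  have g1 : (Gdet (1, 0) s : ℂ) = (s.2 : ℂ) := by simp [Gdet]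
  have g2 : (Gdet (-1, 0) s : ℂ) = -(s.2 : ℂ) := by push_cast [Gdet]; ring
  rw [g1] at b1; rw [g2] at b2
  have comm1 : (1, 0) + s = s + (1, 0) := add_comm _ _
  have comm2 : (-1, 0) + s = s + (-1, 0) := add_comm _ _
  rw [comm1] at b1; rw [comm2] at b2
  have : ⁅T (1, 0) - T (-1, 0), T s⁆ = ⁅T (1, 0), T s⁆ - ⁅T (-1, 0), T s⁆ := by
    simp only [Ring.lie_def]; noncomm_ring
  rw [this, b1, b2]
  linear_combination (norm := module) (-(s.2 : ℂ)) • key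
end

section
/- Let V be a complex vector space, let e, f, h ∈ End_ℂ(V) form an sl₂-triple, and let α = (α₁,α₂) ∈ ℂ². Let M := Γ →₀ V be the direct sum of copies of V indexed by Γ, writing |v,s⟩ for v ∈ V placed in component s ∈ Γ. Define z(r)|v,s⟩ := |v, r+s⟩ and H(r)|v,s⟩ := |(r₁(s₂+α₂) − r₂(s₁+α₁))·v + r₁²·e(v) − r₂²·f(v) − r₁r₂·h(v), r+s⟩ for r = (r₁,r₂), s = (s₁,s₂) ∈ Γ. Then (z, H) is an (𝔄,𝔓)-action on M: z(0) = id, z(r)∘z(s) = z(r+s), H(0) = 0, ⁅H(r), z(s)⁆ = det(r,s)·z(r+s), and ⁅H(r), H(s)⁆ = det(r,s)·H(r+s) for all r, s ∈ Γ. -/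
/-- given an `sl₂`-triple `e, f, h` on `V` and `α ∈ ℂ²`, the
operators on `M = Γ →₀ V` (writing `|v,s⟩ = Finsupp.single s v`) defined by
`z r |v,s⟩ = |v, r+s⟩` and
`H r |v,s⟩ = |(r₁(s₂+α₂) − r₂(s₁+α₁))·v + r₁²·e v − r₂²·f v − r₁r₂·h v, r+s⟩`
form an (𝔄,𝔓)-action. -/
theorem stmt17 {V : Type*} [AddCommGroup V] [Module ℂ V]
    (e f h : Module.End ℂ V)
    (he : ⁅h, e⁆ = (2 : ℂ) • e) (hf : ⁅h, f⁆ = (-2 : ℂ) • f) (hef : ⁅e, f⁆ = h)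
    (α₁ α₂ : ℂ)
    (z H : ℤ × ℤ → Module.End ℂ (ℤ × ℤ →₀ V))
    (hzdef : ∀ (r s : ℤ × ℤ) (v : V),
      z r (Finsupp.single s v) = Finsupp.single (r + s) v)
    (hHdef : ∀ (r s : ℤ × ℤ) (v : V),
      H r (Finsupp.single s v) = Finsupp.single (r + s)
        (((r.1 : ℂ) * ((s.2 : ℂ) + α₂) - (r.2 : ℂ) * ((s.1 : ℂ) + α₁)) • v
          + ((r.1 : ℂ) ^ 2) • e v - ((r.2 : ℂ) ^ 2) • f v
          - ((r.1 : ℂ) * (r.2 : ℂ)) • h v)) :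
    z 0 = 1 ∧
    (∀ r s : ℤ × ℤ, z r * z s = z (r + s)) ∧
    H 0 = 0 ∧
    (∀ r s : ℤ × ℤ, ⁅H r, z s⁆ = (Gdet r s : ℂ) • z (r + s)) ∧
    (∀ r s : ℤ × ℤ, ⁅H r, H s⁆ = (Gdet r s : ℂ) • H (r + s)) := by
  have He : ∀ v : V, h (e v) = e (h v) + (2 : ℂ) • e v := by
    intro v
    have := LinearMap.congr_fun he v
    simp only [Ring.lie_def, LinearMap.sub_apply, Module.End.mul_apply,
      LinearMap.smul_apply] at this
    linear_combination (norm := module) this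
  have Hf : ∀ v : V, h (f v) = f (h v) - (2 : ℂ) • f v := by
    intro v
    have := LinearMap.congr_fun hf v
    simp only [Ring.lie_def, LinearMap.sub_apply, Module.End.mul_apply,
      LinearMap.smul_apply] at this
    linear_combination (norm := module) this
  have Hef : ∀ v : V, e (f v) = f (e v) + h v := by
    intro v
    have := LinearMap.congr_fun hef v
    simp only [Ring.lie_def, LinearMap.sub_apply, Module.End.mul_apply] at this
    linear_combination (norm := module) this
  refine ⟨?_, ?_, ?_, ?_, ?_⟩
  · apply Finsupp.lhom_ext
    intro t v
    simp [hzdef]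
  · intro r s
    apply Finsupp.lhom_ext
    intro t v
    simp [hzdef, Module.End.mul_apply, add_assoc]
  · apply Finsupp.lhom_ext
    intro t v
    simp [hHdef]
  · intro r s
    apply Finsupp.lhom_ext
    intro t v
    simp only [Ring.lie_def, LinearMap.sub_apply, Module.End.mul_apply,
      LinearMap.smul_apply, hzdef, hHdef, map_add, map_sub, map_smul,
      Prod.fst_add, Prod.snd_add]
    rw [show s + (r + t) = r + (s + t) by ring, show r + s + t = r + (s + t) by ring]
    simp only [Finsupp.single_add, Finsupp.single_sub, ← Finsupp.smul_single]
    push_cast [Gdet]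
    module
  · intro r s
    apply Finsupp.lhom_ext
    intro t v
    simp only [Ring.lie_def, LinearMap.sub_apply, Module.End.mul_apply,
      LinearMap.smul_apply, hHdef, map_add, map_sub, map_smul,
      Prod.fst_add, Prod.snd_add]
    rw [show s + (r + t) = r + (s + t) by ring, show r + s + t = r + (s + t) by ring]
    simp only [Finsupp.single_add, Finsupp.single_sub, ← Finsupp.smul_single,
      He, Hf, Hef, map_add, map_sub, map_smul]
    push_cast [Gdet]
    module
end

section
/- Let V be a complex vector space with a T-family T, let k ≥ 2, and suppose Δ_{k+1}(r; u₁,…,u_{k+1}) = 0 for all r, u₁,…,u_{k+1} ∈ Γ. For 0 ≤ ℓ ≤ k let Δ^ℓ := Δ_k(0; e₁,…,e₁, e₂,…,e₂) where e₁ = (1,0) appears ℓ times and e₂ = (0,1) appears k−ℓ times. Then ⁅T(e₁) + T(e₂) − T(e₁+e₂), Δ^ℓ⁆ = (2ℓ−k)·Δ^ℓ. -/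
open Finset

lemma sumSplit {M : Type*} [AddCommMonoid M] {α : Type*} [Fintype α] [DecidableEq α]
    (j : α) (f : Finset α → M) :
    ∑ S : Finset α, f S
      = ∑ S ∈ ((Finset.univ : Finset α).erase j).powerset, (f S + f (insert j S)) :=
  calc ∑ S : Finset α, f S
      = ∑ S ∈ (insert j ((univ : Finset α).erase j)).powerset, f S := by
        rw [Finset.insert_erase (Finset.mem_univ j), Finset.powerset_univ]
    _ = (∑ S ∈ ((univ : Finset α).erase j).powerset, f S)
        + ∑ S ∈ ((univ : Finset α).erase j).powerset, f (insert j S) :=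
        Finset.sum_powerset_insert (Finset.notMem_erase j _) f
    _ = _ := Finset.sum_add_distrib.symm

lemma powersetMap {α β : Type*} [DecidableEq β] (g : α ↪ β) (s : Finset α) :
    (s.map g).powerset = s.powerset.image (fun t => t.map g) := by
  ext t
  simp only [Finset.mem_powerset, Finset.mem_image, Finset.subset_map_iff]
  constructor
  · rintro ⟨u, hu, rfl⟩; exact ⟨u, hu, rfl⟩
  · rintro ⟨u, hu, rfl⟩; exact ⟨u, hu, rfl⟩

lemma sumPowersetMap {M : Type*} [AddCommMonoid M] {α β : Type*} [DecidableEq β]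
    (g : α ↪ β) (s : Finset α) (f : Finset β → M) :
    ∑ t ∈ (s.map g).powerset, f t = ∑ t ∈ s.powerset, f (t.map g) := by
  rw [powersetMap, Finset.sum_image]
  intro x _ y _ h
  exact Finset.map_injective g h

/-- Translation invariance of the `k`-th difference when all `(k+1)`-th differences vanish. -/
lemma delta_shift {V : Type*} [AddCommGroup V] [Module ℂ V]
    (T : ℤ × ℤ → Module.End ℂ V) (k : ℕ)
    (hvan : ∀ (r : ℤ × ℤ) (u : Fin (k + 1) → ℤ × ℤ), Δ T (k + 1) r u = 0)
    (r w : ℤ × ℤ) (u : Fin k → ℤ × ℤ) :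
    Δ T k (r + w) u = Δ T k r u := by
  have h := hvan r (Fin.cons w u)
  unfold Δ at h ⊢
  rw [sumSplit (0 : Fin (k + 1))] at h
  have he : ((univ : Finset (Fin (k + 1))).erase 0)
      = (univ : Finset (Fin k)).map ⟨Fin.succ, Fin.succ_injective _⟩ := by
    rw [Fin.univ_succ, Finset.erase_cons]
  rw [he, sumPowersetMap, Finset.powerset_univ] at h
  have hsimp : ∀ S : Finset (Fin k),
      ((-1 : ℂ) ^ (S.map ⟨Fin.succ, Fin.succ_injective k⟩).card)
          • T (r + ∑ i ∈ S.map ⟨Fin.succ, Fin.succ_injective k⟩, Fin.cons w u i)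
        + ((-1 : ℂ) ^ (insert (0 : Fin (k+1)) (S.map ⟨Fin.succ, Fin.succ_injective k⟩)).card)
          • T (r + ∑ i ∈ insert (0 : Fin (k+1)) (S.map ⟨Fin.succ, Fin.succ_injective k⟩), Fin.cons w u i)
      = ((-1 : ℂ) ^ S.card) • T (r + ∑ i ∈ S, u i)
        - ((-1 : ℂ) ^ S.card) • T (r + w + ∑ i ∈ S, u i) := by
    intro S
    have h0 : (0 : Fin (k+1)) ∉ S.map ⟨Fin.succ, Fin.succ_injective k⟩ := by
      simp [Finset.mem_map, Fin.succ_ne_zero]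
    rw [Finset.card_insert_of_notMem h0, Finset.sum_insert h0, Finset.card_map,
      Finset.sum_map]
    simp only [Function.Embedding.coeFn_mk, Fin.cons_succ, Fin.cons_zero, pow_succ]
    rw [add_assoc, ← add_assoc r w]
    module
  rw [Finset.sum_congr rfl (fun S _ => hsimp S), Finset.sum_sub_distrib,
    sub_eq_zero] at h
  exact h.symm

lemma altSumZero (k : ℕ) (hk : 2 ≤ k) (c : Fin k → ℤ) :
    ∑ S : Finset (Fin k), (-1 : ℂ) ^ S.card * ((∑ j ∈ S, c j : ℤ) : ℂ) = 0 := by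
  have hrw : ∀ S : Finset (Fin k),
      (-1 : ℂ) ^ S.card * ((∑ j ∈ S, c j : ℤ) : ℂ)
        = ∑ j : Fin k, (if j ∈ S then (-1 : ℂ) ^ S.card * (c j : ℂ) else 0) := by
    intro S
    rw [Finset.sum_ite_mem, Finset.univ_inter, ← Finset.mul_sum]
    push_cast
    ring
  rw [Finset.sum_congr rfl fun S _ => hrw S, Finset.sum_comm]
  refine Finset.sum_eq_zero fun j _ => ?_
  rw [sumSplit j]
  have hstep : ∀ S ∈ ((univ : Finset (Fin k)).erase j).powerset,
      ((if j ∈ S then (-1 : ℂ) ^ S.card * (c j : ℂ) else 0)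
        + (if j ∈ insert j S then (-1 : ℂ) ^ (insert j S).card * (c j : ℂ) else 0))
      = (-1 : ℂ) ^ S.card * (-(c j : ℂ)) := by
    intro S hS
    have hj : j ∉ S := fun hmem =>
      (Finset.mem_erase.mp (Finset.mem_powerset.mp hS hmem)).1 rfl
    rw [if_neg hj, if_pos (Finset.mem_insert_self j S),
      Finset.card_insert_of_notMem hj, pow_succ]
    ring
  rw [Finset.sum_congr rfl hstep, ← Finset.sum_mul]
  have hne : ((univ : Finset (Fin k)).erase j).Nonempty := by
    rw [← Finset.card_pos, Finset.card_erase_of_mem (Finset.mem_univ j), Finset.card_univ,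
      Fintype.card_fin]
    omega
  have hz : ∑ S ∈ ((univ : Finset (Fin k)).erase j).powerset, (-1 : ℂ) ^ S.card = 0 := by
    have h := Finset.sum_powerset_neg_one_pow_card_of_nonempty hne
    calc ∑ S ∈ ((univ : Finset (Fin k)).erase j).powerset, (-1 : ℂ) ^ S.card
        = ((∑ S ∈ ((univ : Finset (Fin k)).erase j).powerset, (-1 : ℤ) ^ S.card : ℤ) : ℂ) := by
          push_cast; rfl
      _ = 0 := by rw [h]; exact Int.cast_zero
  rw [hz, zero_mul]

lemma cardFilterLt (k ℓ : ℕ) (hℓ : ℓ ≤ k) :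
    ((univ : Finset (Fin k)).filter fun j : Fin k => (j : ℕ) < ℓ).card = ℓ := by
  have he : ((univ : Finset (Fin k)).filter fun j : Fin k => (j : ℕ) < ℓ)
      = (univ : Finset (Fin ℓ)).map (Fin.castLEEmb hℓ) := by
    ext x
    simp only [Finset.mem_filter, Finset.mem_univ, true_and, Finset.mem_map,
      Fin.castLEEmb, Function.Embedding.coeFn_mk]
    constructor
    · intro h; exact ⟨⟨x, h⟩, rfl⟩
    · rintro ⟨i, rfl⟩; exact i.2
  rw [he, Finset.card_map, Finset.card_univ, Fintype.card_fin]

/-- if all `(k+1)`-th order differences vanish (`k ≥ 2`), then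
`Δ^ℓ := Δ_k(0; e₁,…,e₁, e₂,…,e₂)` (with `e₁` appearing `ℓ` times, `0 ≤ ℓ ≤ k`)
is an eigenvector of `ad (T e₁ + T e₂ − T (e₁+e₂))` with eigenvalue `2ℓ − k`. -/
theorem stmt18 {V : Type*} [AddCommGroup V] [Module ℂ V]
    (T : ℤ × ℤ → Module.End ℂ V) (hT : IsTFamily T)
    (k : ℕ) (hk : 2 ≤ k)
    (hvan : ∀ (r : ℤ × ℤ) (u : Fin (k + 1) → ℤ × ℤ), Δ T (k + 1) r u = 0)
    (ℓ : ℕ) (hℓ : ℓ ≤ k) :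
    ⁅T (1, 0) + T (0, 1) - T (1, 1),
        Δ T k 0 (fun i => if (i : ℕ) < ℓ then ((1, 0) : ℤ × ℤ) else (0, 1))⁆
      = ((2 * (ℓ : ℤ) - (k : ℤ) : ℤ) : ℂ) •
          Δ T k 0 (fun i => if (i : ℕ) < ℓ then ((1, 0) : ℤ × ℤ) else (0, 1)) := by
  obtain ⟨hT0, hTb⟩ := hT
  set u : Fin k → ℤ × ℤ := fun i => if (i : ℕ) < ℓ then ((1, 0) : ℤ × ℤ) else (0, 1) with hu
  -- the "per-j" summand
  set G : Fin k → Finset (Fin k) → Module.End ℂ V := fun j S =>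
    ((-1 : ℂ) ^ S.card) •
      ( ((u j).2 : ℂ) • T ((1, 0) + ∑ i ∈ S, u i)
        - ((u j).1 : ℂ) • T ((0, 1) + ∑ i ∈ S, u i)
        - (((u j).2 : ℂ) - ((u j).1 : ℂ)) • T ((1, 1) + ∑ i ∈ S, u i)) with hG
  -- Step 1: pointwise bracket computation
  have key : ∀ S : Finset (Fin k),
      ⁅T (1, 0) + T (0, 1) - T (1, 1), ((-1 : ℂ) ^ S.card) • T ((0 : ℤ × ℤ) + ∑ i ∈ S, u i)⁆
        = (∑ j : Fin k, if j ∈ S then G j S else 0)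
          - ((-1 : ℂ) ^ S.card * (((∑ i ∈ S, u i).2 : ℤ) : ℂ)) • T (1, 0)
          + ((-1 : ℂ) ^ S.card * (((∑ i ∈ S, u i).1 : ℤ) : ℂ)) • T (0, 1)
          + ((-1 : ℂ) ^ S.card *
              (((∑ i ∈ S, u i).2 - (∑ i ∈ S, u i).1 : ℤ) : ℂ)) • T (1, 1) := by
    intro S
    have hmain : (∑ j : Fin k, if j ∈ S then G j S else 0)
        = ((-1 : ℂ) ^ S.card) •
            ( (((∑ i ∈ S, u i).2 : ℤ) : ℂ) • T ((1, 0) + ∑ i ∈ S, u i)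
              - (((∑ i ∈ S, u i).1 : ℤ) : ℂ) • T ((0, 1) + ∑ i ∈ S, u i)
              - ((((∑ i ∈ S, u i).2 : ℤ) : ℂ) - (((∑ i ∈ S, u i).1 : ℤ) : ℂ)) •
                  T ((1, 1) + ∑ i ∈ S, u i)) := by
      rw [Finset.sum_ite_mem, Finset.univ_inter, hG]
      simp only
      rw [← Finset.smul_sum]
      congr 1
      rw [Finset.sum_sub_distrib, Finset.sum_sub_distrib, ← Finset.sum_smul, ← Finset.sum_smul,
        ← Finset.sum_smul]
      have h1 : (∑ j ∈ S, ((u j).2 : ℂ)) = (((∑ i ∈ S, u i).2 : ℤ) : ℂ) := by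
        rw [Prod.snd_sum]; push_cast; rfl
      have h2 : (∑ j ∈ S, ((u j).1 : ℂ)) = (((∑ i ∈ S, u i).1 : ℤ) : ℂ) := by
        rw [Prod.fst_sum]; push_cast; rfl
      have h3 : (∑ j ∈ S, (((u j).2 : ℂ) - ((u j).1 : ℂ)))
          = (((∑ i ∈ S, u i).2 : ℤ) : ℂ) - (((∑ i ∈ S, u i).1 : ℤ) : ℂ) := by
        rw [Finset.sum_sub_distrib, h1, h2]
      rw [h1, h2, h3]
    letI := LieRing.ofAssociativeRing (A := Module.End ℂ V)
    rw [hmain, zero_add, lie_smul, sub_lie, add_lie, hTb, hTb, hTb]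
    simp only [Gdet]
    push_cast
    module
  -- Step 2: sum the key identity
  have lieSum : ∀ (x : Module.End ℂ V) (f : Finset (Fin k) → Module.End ℂ V),
      ⁅x, ∑ S : Finset (Fin k), f S⁆ = ∑ S : Finset (Fin k), ⁅x, f S⁆ := by
    intro x f
    simp only [Ring.lie_def, Finset.mul_sum, Finset.sum_mul, Finset.sum_sub_distrib]
  unfold Δ
  rw [lieSum, Finset.sum_congr rfl fun S _ => key S, Finset.sum_add_distrib,
    Finset.sum_add_distrib, Finset.sum_sub_distrib]
  -- the three "constant" sums vanish
  have hz1 : (∑ S : Finset (Fin k),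
      ((-1 : ℂ) ^ S.card * (((∑ i ∈ S, u i).2 : ℤ) : ℂ)) • T (1, 0)) = 0 := by
    rw [← Finset.sum_smul]
    have : (∑ S : Finset (Fin k), (-1 : ℂ) ^ S.card * (((∑ i ∈ S, u i).2 : ℤ) : ℂ)) = 0 := by
      have := altSumZero k hk (fun j => (u j).2)
      simpa [Prod.snd_sum] using this
    rw [this, zero_smul]
  have hz2 : (∑ S : Finset (Fin k),
      ((-1 : ℂ) ^ S.card * (((∑ i ∈ S, u i).1 : ℤ) : ℂ)) • T (0, 1)) = 0 := by
    rw [← Finset.sum_smul]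
    have : (∑ S : Finset (Fin k), (-1 : ℂ) ^ S.card * (((∑ i ∈ S, u i).1 : ℤ) : ℂ)) = 0 := by
      have := altSumZero k hk (fun j => (u j).1)
      simpa [Prod.fst_sum] using this
    rw [this, zero_smul]
  have hz3 : (∑ S : Finset (Fin k),
      ((-1 : ℂ) ^ S.card *
        (((∑ i ∈ S, u i).2 - (∑ i ∈ S, u i).1 : ℤ) : ℂ)) • T (1, 1)) = 0 := by
    rw [← Finset.sum_smul]
    have : (∑ S : Finset (Fin k), (-1 : ℂ) ^ S.card *
        (((∑ i ∈ S, u i).2 - (∑ i ∈ S, u i).1 : ℤ) : ℂ)) = 0 := by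
      have := altSumZero k hk (fun j => (u j).2 - (u j).1)
      simpa [Finset.sum_sub_distrib, Prod.fst_sum, Prod.snd_sum] using this
    rw [this, zero_smul]
  rw [hz1, hz2, hz3, sub_zero, add_zero, add_zero]
  have hfold : (∑ S : Finset (Fin k), ((-1 : ℂ) ^ S.card) • T ((0 : ℤ × ℤ) + ∑ i ∈ S, u i))
      = Δ T k 0 u := rfl
  rw [hfold]
  -- now evaluate the main double sum
  rw [Finset.sum_comm]
  -- per-j evaluation
  have hD : Δ T k ((1, 1) : ℤ × ℤ) u = Δ T k 0 u := by
    have h := delta_shift T k hvan 0 (1, 1) u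
    rwa [zero_add] at h
  have perj : ∀ j : Fin k,
      (∑ S : Finset (Fin k), if j ∈ S then G j S else 0)
        = (if (j : ℕ) < ℓ then Δ T k 0 u else -Δ T k 0 u) := by
    intro j
    have hsplitΔ : Δ T k ((1, 1) : ℤ × ℤ) u
        = ∑ S ∈ ((univ : Finset (Fin k)).erase j).powerset,
            (((-1 : ℂ) ^ S.card) • T ((1, 1) + ∑ i ∈ S, u i)
              + ((-1 : ℂ) ^ (insert j S).card) • T ((1, 1) + ∑ i ∈ insert j S, u i)) := by
      unfold Δ
      exact sumSplit j _
    rw [sumSplit j]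
    by_cases hcase : (j : ℕ) < ℓ
    · have huj : u j = ((1, 0) : ℤ × ℤ) := by rw [hu]; simp only; rw [if_pos hcase]
      rw [if_pos hcase, ← hD, hsplitΔ]
      refine Finset.sum_congr rfl fun S hS => ?_
      have hj : j ∉ S := fun hmem =>
        (Finset.mem_erase.mp (Finset.mem_powerset.mp hS hmem)).1 rfl
      rw [if_neg hj, if_pos (Finset.mem_insert_self j S), zero_add, hG]
      simp only
      rw [Finset.card_insert_of_notMem hj, Finset.sum_insert hj, huj]
      have harg : ((0, 1) : ℤ × ℤ) + ((1, 0) + ∑ i ∈ S, u i) = (1, 1) + ∑ i ∈ S, u i := by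
        rw [← add_assoc]
        norm_num
      rw [harg]
      simp only [pow_succ]
      norm_num
      try module
    · have huj : u j = ((0, 1) : ℤ × ℤ) := by rw [hu]; simp only; rw [if_neg hcase]
      rw [if_neg hcase, ← hD, hsplitΔ, ← Finset.sum_neg_distrib]
      refine Finset.sum_congr rfl fun S hS => ?_
      have hj : j ∉ S := fun hmem =>
        (Finset.mem_erase.mp (Finset.mem_powerset.mp hS hmem)).1 rfl
      rw [if_neg hj, if_pos (Finset.mem_insert_self j S), zero_add, hG]
      simp only
      rw [Finset.card_insert_of_notMem hj, Finset.sum_insert hj, huj]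
      have harg : ((1, 0) : ℤ × ℤ) + ((0, 1) + ∑ i ∈ S, u i) = (1, 1) + ∑ i ∈ S, u i := by
        rw [← add_assoc]
        norm_num
      rw [harg]
      simp only [pow_succ]
      norm_num
      try module
  rw [Finset.sum_congr rfl fun j _ => perj j, Finset.sum_ite, Finset.sum_const,
    Finset.sum_const, cardFilterLt k ℓ hℓ]
  have hcard2 : ((univ : Finset (Fin k)).filter fun j : Fin k => ¬(j : ℕ) < ℓ).card = k - ℓ := by
    have h := Finset.card_filter_add_card_filter_not
      (s := (univ : Finset (Fin k))) (p := fun j : Fin k => (j : ℕ) < ℓ)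
    rw [cardFilterLt k ℓ hℓ, Finset.card_univ, Fintype.card_fin] at h
    omega
  rw [hcard2, ← Nat.cast_smul_eq_nsmul ℂ, ← Nat.cast_smul_eq_nsmul ℂ, Nat.cast_sub hℓ]
  push_cast
  module
end

section
/- Let V be a complex vector space with a T-family T, and let k ≥ 2. Let D_k := Δ_k(e₁; e₂,…,e₂) with e₂ = (0,1) appearing k times and e₁ = (1,0). Then ⁅T(−e₂), ⁅T(−e₁), D_k⁆⁆ = −k·D_k. -/
open Finset in
lemma delta_eq {V : Type*} [AddCommGroup V] [Module ℂ V]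
    (T : ℤ × ℤ → Module.End ℂ V) (k : ℕ) :
    Δ T k (1, 0) (fun _ => ((0, 1) : ℤ × ℤ))
      = ∑ j ∈ range (k + 1), ((-1 : ℂ) ^ j * (k.choose j)) • T (1, (j : ℤ)) := by
  unfold Δ
  have h1 : ∀ S : Finset (Fin k),
      ((1, 0) : ℤ × ℤ) + ∑ _i ∈ S, ((0, 1) : ℤ × ℤ) = (1, (S.card : ℤ)) := by
    intro S
    simp [Finset.sum_const, Prod.ext_iff]
  simp only [h1]
  rw [← Finset.powerset_univ, Finset.sum_powerset]
  rw [Finset.card_univ, Fintype.card_fin]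
  refine Finset.sum_congr rfl fun j _ => ?_
  have : ∀ t ∈ Finset.powersetCard j (univ : Finset (Fin k)),
      ((-1:ℂ) ^ t.card) • T (1, (t.card : ℤ)) = ((-1:ℂ) ^ j) • T (1, (j : ℤ)) := by
    intro t ht
    rw [(Finset.mem_powersetCard.1 ht).2]
  rw [Finset.sum_congr rfl this, Finset.sum_const, Finset.card_powersetCard,
    Finset.card_univ, Fintype.card_fin, ← Nat.cast_smul_eq_nsmul ℂ, smul_smul]
  ring_nf


section

attribute [local instance 100] LieRing.ofAssociativeRing

open Finset in
lemma brk {V : Type*} [AddCommGroup V] [Module ℂ V]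
    (T : ℤ × ℤ → Module.End ℂ V) (hT : IsTFamily T) (c : ℤ) :
    ⁅T (0, -1), ⁅T (-1, 0), T (1, c)⁆⁆
      = (-(c : ℂ)) • (T (-1, -1) - T (-1, 0) - T (1, c - 1) + T (1, c)) := by
  obtain ⟨-, h⟩ := hT
  rw [h (-1, 0) (1, c), lie_smul, lie_sub, lie_sub, h, h, h]
  simp only [Gdet, Prod.mk_add_mk]
  norm_num
  have hc : (-1 : ℤ) + c = c - 1 := by ring
  rw [hc]
  module


open Finset in
lemma hS0 (m : ℕ) :
    ∑ j ∈ range (m + 2 + 1), ((-1 : ℂ) ^ j * ((m+2).choose j) * (-(j : ℂ))) = 0 := by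
  rw [Finset.sum_range_succ']
  have h1 : ∀ i ∈ range (m + 2),
      ((-1:ℂ) ^ (i+1) * ((m+2).choose (i+1)) * (-((i+1 : ℕ) : ℂ)))
        = ((m+2 : ℕ) : ℂ) * ((-1:ℂ)^i * ((m+1).choose i)) := by
    intro i _
    have h0 := congrArg (Nat.cast : ℕ → ℂ) (Nat.add_one_mul_choose_eq (m+1) i)
    simp only [Nat.succ_eq_add_one, show m+1+1 = m+2 from rfl] at h0
    push_cast at h0 ⊢
    linear_combination (-(-1:ℂ)^i) * h0
  rw [Finset.sum_congr rfl h1, ← Finset.mul_sum]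
  have h2 : ∑ i ∈ range (m + 1 + 1), ((-1:ℂ)^i * ((m+1).choose i)) = 0 := by
    have := Int.alternating_sum_range_choose_of_ne (n := m+1) (by omega)
    have := congrArg (Int.cast : ℤ → ℂ) this
    push_cast at this
    convert this using 2
  rw [h2]
  simp


open Finset in
lemma shift_combine {M : Type*} [AddCommGroup M] [Module ℂ M] (K : ℕ) (c e : ℕ → ℂ) (g : ℤ → M)
    (hc0 : c 0 = 0) (hlast : e K = c K)
    (hstep : ∀ i < K, e i = c i - c (i + 1)) :
    -(∑ j ∈ range (K + 1), c j • g ((j : ℤ) - 1)) + ∑ j ∈ range (K + 1), c j • g (j : ℤ)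
      = ∑ j ∈ range (K + 1), e j • g (j : ℤ) := by
  rw [Finset.sum_range_succ' (fun j => c j • g ((j : ℤ) - 1)) K]
  rw [Finset.sum_range_succ (fun j => c j • g (j : ℤ)) K,
      Finset.sum_range_succ (fun j => e j • g (j : ℤ)) K, hlast]
  have h : ∀ i ∈ range K, e i • g (i : ℤ)
      = c i • g (i : ℤ) - c (i + 1) • g (((i + 1 : ℕ) : ℤ) - 1) := by
    intro i hi
    have h1 : (((i + 1 : ℕ) : ℤ) - 1) = (i : ℤ) := by push_cast; ring
    rw [h1, hstep i (mem_range.1 hi), sub_smul]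
  rw [Finset.sum_congr rfl h, Finset.sum_sub_distrib]
  simp only [hc0, zero_smul, add_zero, Nat.cast_zero]
  abel


open Finset in
lemma my_lie_sum {L : Type*} [LieRing L] {ι : Type*} (x : L) (s : Finset ι) (f : ι → L) :
    ⁅x, ∑ i ∈ s, f i⁆ = ∑ i ∈ s, ⁅x, f i⁆ := by
  classical
  induction s using Finset.induction with
  | empty => simp
  | insert a s h ih => rw [Finset.sum_insert h, Finset.sum_insert h, lie_add, ih]

end

/-- with `D_k = Δ_k(e₁; e₂,…,e₂)` (`e₂` appearing `k` times,
`k ≥ 2`), one has `⁅T(−e₂), ⁅T(−e₁), D_k⁆⁆ = −k·D_k`. -/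
theorem stmt19 {V : Type*} [AddCommGroup V] [Module ℂ V]
    (T : ℤ × ℤ → Module.End ℂ V) (hT : IsTFamily T)
    (k : ℕ) (hk : 2 ≤ k) :
    ⁅T (0, -1), ⁅T (-1, 0), Δ T k (1, 0) (fun _ => ((0, 1) : ℤ × ℤ))⁆⁆
      = (-(k : ℂ)) • Δ T k (1, 0) (fun _ => ((0, 1) : ℤ × ℤ)) := by
  obtain ⟨m, rfl⟩ : ∃ m, k = m + 2 := ⟨k - 2, by omega⟩
  rw [delta_eq]
  letI := LieRing.ofAssociativeRing (A := Module.End ℂ V)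
  simp only [my_lie_sum, lie_smul, brk T hT, Int.cast_natCast]
  rw [Finset.smul_sum]
  simp only [smul_smul, smul_sub, smul_add]
  rw [Finset.sum_add_distrib, Finset.sum_sub_distrib, Finset.sum_sub_distrib,
    ← Finset.sum_smul, ← Finset.sum_smul]
  rw [hS0 m, zero_smul, zero_smul, sub_zero, zero_sub]
  exact shift_combine (m + 2)
    (fun j => (-1 : ℂ) ^ j * ((m + 2).choose j) * (-(j : ℂ)))
    (fun j => -((m + 2 : ℕ) : ℂ) * ((-1 : ℂ) ^ j * ((m + 2).choose j)))
    (fun c => T (1, c))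
    (by norm_num)
    (by simp [Nat.choose_self]; ring)
    (by
      intro i hi
      have h0 := congrArg (Nat.cast : ℕ → ℂ) (Nat.choose_succ_right_eq (m + 2) i)
      push_cast [Nat.cast_sub (le_of_lt hi)] at h0
      push_cast
      linear_combination (-1 : ℂ) ^ i * h0)
end
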